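/- Let G be a bull-free graph with no K_4 subgraph, and let Q = v_1 v_2 ... v_p v_1 be a smallest induced odd cycle in G of length p ≥ 5. If C_i ≠ ∅ for some index i, then C_{i+1} = ∅ and C_{i-1} = ∅. -/

import Mathlib

/-- `H` is contained in `G` as an induced subgraph. -/
def ContainsInduced {α β : Type*} (H : SimpleGraph α) (G : SimpleGraph β) : Prop :=
  ∃ f : α ↪ β, ∀ a b, G.Adj (f a) (f b) ↔ H.Adj a b

/-- The bull: a triangle `v2 v3 v4` with pendant edges `v1 v2` and `v4 v5`. -/
def bull : SimpleGraph (Fin 5) :=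
  SimpleGraph.fromRel (fun a b =>
    ((a : ℕ), (b : ℕ)) ∈ [(0, 1), (1, 2), (2, 3), (3, 4), (1, 3)])

/-- `u : ZMod k → V` lists the vertices (in cyclic order) of an induced cycle of
length `k` in `G`. -/
def IsInducedCycle {V : Type*} (G : SimpleGraph V) {k : ℕ} (u : ZMod k → V) : Prop :=
  Function.Injective u ∧ ∀ i j : ZMod k, G.Adj (u i) (u j) ↔ (j = i + 1 ∨ i = j + 1)

/-- `v : ZMod p → V` is a smallest induced odd cycle of `G` of length `p ≥ 5`:
an induced odd cycle of length `p ≥ 5` such that `G` has no induced odd cycle of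
length `k` with `5 ≤ k < p`. -/
def IsSmallestInducedOddCycle {V : Type*} (G : SimpleGraph V) {p : ℕ}
    (v : ZMod p → V) : Prop :=
  5 ≤ p ∧ Odd p ∧ IsInducedCycle G v ∧
    ∀ k : ℕ, 5 ≤ k → k < p → Odd k → ∀ u : ZMod k → V, ¬ IsInducedCycle G u

/-- `A_i`: the vertices outside the cycle `Q` whose neighbourhood on `Q` is
exactly `{v_i}`. -/
def setA {V : Type*} (G : SimpleGraph V) {p : ℕ} (v : ZMod p → V) (i : ZMod p) :
    Set V :=
  {w | w ∉ Set.range v ∧ ∀ j : ZMod p, G.Adj w (v j) ↔ j = i}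

/-- `B_i`: the vertices outside the cycle `Q` whose neighbourhood on `Q` is
exactly `{v_i, v_{i+2}}`. -/
def setB {V : Type*} (G : SimpleGraph V) {p : ℕ} (v : ZMod p → V) (i : ZMod p) :
    Set V :=
  {w | w ∉ Set.range v ∧ ∀ j : ZMod p, G.Adj w (v j) ↔ (j = i ∨ j = i + 2)}

/-- `C_i`: the vertices outside the cycle `Q` whose neighbourhood on `Q` is
exactly `{v_i, v_{i+1}, v_{i+2}}`. -/
def setC {V : Type*} (G : SimpleGraph V) {p : ℕ} (v : ZMod p → V) (i : ZMod p) :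
    Set V :=
  {w | w ∉ Set.range v ∧ ∀ j : ZMod p, G.Adj w (v j) ↔ (j = i ∨ j = i + 1 ∨ j = i + 2)}

/-- `D_i`: the vertices outside the cycle `Q` whose neighbourhood on `Q` is
exactly `{v_i, v_{i+1}, v_{i+2}, v_{i+3}}`. -/
def setD {V : Type*} (G : SimpleGraph V) {p : ℕ} (v : ZMod p → V) (i : ZMod p) :
    Set V :=
  {w | w ∉ Set.range v ∧
    ∀ j : ZMod p, G.Adj w (v j) ↔ (j = i ∨ j = i + 1 ∨ j = i + 2 ∨ j = i + 3)}

/-! A vertex `x ∈ C_i` and a vertex `y ∈ C_{i+1}` cannot coexist: if `x ∼ y`, then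
`x, y, v_{i+1}, v_{i+2}` form a `K_4`; otherwise `x, v_{i+2}, y, v_{i+3}, v_{i+4}` induce a bull
(the triangle `v_{i+2} y v_{i+3}` with pendants `x` and `v_{i+4}`). The case `C_{i-1}` is the same
statement shifted by one. -/

theorem ContainsInduced.of_adj_iff {α β : Type*} {H : SimpleGraph α} {G : SimpleGraph β}
    (hH : ∀ a b, (∀ c, H.Adj a c ↔ H.Adj b c) → a = b)
    (f : α → β) (hf : ∀ a b, G.Adj (f a) (f b) ↔ H.Adj a b) : ContainsInduced H G :=
  ⟨⟨f, fun a b hab => hH a b fun c => by rw [← hf, ← hf, hab]⟩, hf⟩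

theorem bull_eq_of_adj_iff (a b : Fin 5) (h : ∀ c, bull.Adj a c ↔ bull.Adj b c) : a = b := by
  simp only [bull, SimpleGraph.fromRel_adj] at h
  revert a b
  decide

theorem containsInduced_bull {V : Type*} {G : SimpleGraph V} {a b c d e : V}
    (hab : G.Adj a b) (hbc : G.Adj b c) (hcd : G.Adj c d) (hde : G.Adj d e) (hbd : G.Adj b d)
    (hac : ¬ G.Adj a c) (had : ¬ G.Adj a d) (hae : ¬ G.Adj a e) (hbe : ¬ G.Adj b e)
    (hce : ¬ G.Adj c e) : ContainsInduced bull G := by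
  refine .of_adj_iff bull_eq_of_adj_iff ![a, b, c, d, e] fun x y => ?_
  fin_cases x <;> fin_cases y <;> simp [bull, *, G.adj_comm]

theorem ZMod.natCast_ne_zero_of_lt {p n : ℕ} (hn : 0 < n) (hnp : n < p) :
    (n : ZMod p) ≠ 0 := by
  rw [Ne, ZMod.natCast_eq_zero_iff]
  exact Nat.not_dvd_of_pos_of_lt hn hnp

namespace IsInducedCycle

variable {V : Type*} {G : SimpleGraph V} {p : ℕ} {v : ZMod p → V}

theorem adj_add_one (hv : IsInducedCycle G v) (j : ZMod p) : G.Adj (v j) (v (j + 1)) :=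
  (hv.2 _ _).2 (Or.inl rfl)

theorem not_adj_add_two (hv : IsInducedCycle G v) (hp : 3 < p) (j : ZMod p) :
    ¬ G.Adj (v j) (v (j + 2)) := by
  have h1 : (1 : ZMod p) ≠ 0 := by exact_mod_cast ZMod.natCast_ne_zero_of_lt one_pos (by omega)
  have h3 : (3 : ZMod p) ≠ 0 := by exact_mod_cast ZMod.natCast_ne_zero_of_lt three_pos hp
  rw [hv.2]
  rintro (h | h)
  exacts [h1 (by linear_combination h), h3 (by linear_combination -h)]

end IsInducedCycle

section setC

variable {V : Type*} {G : SimpleGraph V} {p : ℕ} {v : ZMod p → V} {i : ZMod p} {w : V}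

theorem adj_of_mem_setC (hw : w ∈ setC G v i) :
    G.Adj w (v i) ∧ G.Adj w (v (i + 1)) ∧ G.Adj w (v (i + 2)) :=
  ⟨(hw.2 _).2 (Or.inl rfl), (hw.2 _).2 (Or.inr (Or.inl rfl)), (hw.2 _).2 (Or.inr (Or.inr rfl))⟩

theorem not_adj_of_mem_setC (hp : 4 < p) (hw : w ∈ setC G v i) :
    ¬ G.Adj w (v (i + 3)) ∧ ¬ G.Adj w (v (i + 4)) := by
  have h1 : (1 : ZMod p) ≠ 0 := by exact_mod_cast ZMod.natCast_ne_zero_of_lt one_pos (by omega)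
  have h2 : (2 : ZMod p) ≠ 0 := by exact_mod_cast ZMod.natCast_ne_zero_of_lt two_pos (by omega)
  have h3 : (3 : ZMod p) ≠ 0 := by exact_mod_cast ZMod.natCast_ne_zero_of_lt three_pos (by omega)
  have h4 : (4 : ZMod p) ≠ 0 := by exact_mod_cast ZMod.natCast_ne_zero_of_lt four_pos hp
  rw [hw.2, hw.2]
  constructor <;> rintro (h | h | h)
  exacts [h3 (by linear_combination h), h2 (by linear_combination h), h1 (by linear_combination h),
    h4 (by linear_combination h), h3 (by linear_combination h), h2 (by linear_combination h)]

theorem setC_add_one_eq_empty (hbull : ¬ ContainsInduced bull G) (hK4 : G.CliqueFree 4)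
    (hv : IsInducedCycle G v) (hp : 4 < p) (hC : (setC G v i).Nonempty) :
    setC G v (i + 1) = ∅ := by
  obtain ⟨x, hx⟩ := hC
  refine Set.eq_empty_of_forall_notMem fun y hy => ?_
  obtain ⟨-, hx1, hx2⟩ := adj_of_mem_setC hx
  obtain ⟨hx3, hx4⟩ := not_adj_of_mem_setC hp hx
  obtain ⟨hy1, hy2, hy3⟩ := adj_of_mem_setC hy
  obtain ⟨hy4, -⟩ := not_adj_of_mem_setC hp hy
  norm_num [add_assoc] at hy2 hy3 hy4
  have hv12 : G.Adj (v (i + 1)) (v (i + 2)) := by convert hv.adj_add_one (i + 1) using 2; ring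
  have hv23 : G.Adj (v (i + 2)) (v (i + 3)) := by convert hv.adj_add_one (i + 2) using 2; ring
  have hv34 : G.Adj (v (i + 3)) (v (i + 4)) := by convert hv.adj_add_one (i + 3) using 2; ring
  have hv24 : ¬ G.Adj (v (i + 2)) (v (i + 4)) := by
    convert hv.not_adj_add_two (by omega) (i + 2) using 3; ring
  by_cases hxy : G.Adj x y
  · classical
    refine hK4 _ ((SimpleGraph.is3Clique_triple_iff.2 ⟨hy1, hy2, hv12⟩).insert (a := x) ?_)
    simp [hxy, hx1, hx2]
  · exact hbull (containsInduced_bull hx2 hy2.symm hy3 hv34 hv23 hxy hx3 hx4 hv24 hy4)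

end setC

theorem setC_nonempty_imp_nbrs_empty_general {V : Type*} (G : SimpleGraph V)
    (hbull : ¬ ContainsInduced bull G) (hK4 : G.CliqueFree 4)
    {p : ℕ} (v : ZMod p → V) (hQ : IsSmallestInducedOddCycle G v)
    (i : ZMod p) (hC : (setC G v i).Nonempty) :
    setC G v (i + 1) = ∅ ∧ setC G v (i - 1) = ∅ := by
  obtain ⟨hp, -, hv, -⟩ := hQ
  refine ⟨setC_add_one_eq_empty hbull hK4 hv hp hC, Set.not_nonempty_iff_eq_empty.1 fun hC' => ?_⟩
  have hCi := setC_add_one_eq_empty hbull hK4 hv hp hC'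
  rw [sub_add_cancel] at hCi
  exact hC.ne_empty hCi

/-- Let `G` be a bull-free graph with no `K_4` subgraph, and let `Q` be a smallest
induced odd cycle of `G` of length `p ≥ 5`.  If `C_i ≠ ∅` for some index `i`, then
`C_{i+1} = ∅` and `C_{i-1} = ∅`. -/
theorem setC_nonempty_imp_nbrs_empty {V : Type*} [Fintype V] (G : SimpleGraph V)
    (hbull : ¬ ContainsInduced bull G) (hK4 : G.CliqueFree 4)
    {p : ℕ} (v : ZMod p → V) (hQ : IsSmallestInducedOddCycle G v)
    (i : ZMod p) (hC : (setC G v i).Nonempty) :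
    setC G v (i + 1) = ∅ ∧ setC G v (i - 1) = ∅ :=
  setC_nonempty_imp_nbrs_empty_general G hbull hK4 v hQ i hC
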